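/- arXiv:2504.04349 — 4 statements merged into one kernel-verified Lean document; each statement's English description precedes it below -/
import Mathlib

section
/- For Bernoulli distributions, if 0 ≤ a ≤ 1/2 and 0 ≤ δ ≤ 1/2 (with (1±δ)a ∈ [0,1]), then the Kullback–Leibler divergence KL(Bern(a), Bern((1±δ)a)) is at most 2aδ². -/
/-! Writing `q = (1+ε)a` and `t = -εa/(1-a)`, so that `1 - q = (1-a)(1+t)`, the divergence is
`-a log(1+ε) - (1-a) log(1+t)`. The bound `x - x² ≤ log(1+x)` for `x ≥ -1/2` makes the linear
terms cancel (`aε + (1-a)t = 0`) and leaves `aε² + (1-a)t² = aε² - aεt ≤ 2aε²`,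
since `|t| ≤ |ε|` when `a ≤ 1/2`. -/

open Real

/-- KL divergence between Bernoulli distributions with parameters `p` and `q`,
`KL(Bern(p), Bern(q)) = p·log(p/q) + (1−p)·log((1−p)/(1−q))`
(with Lean's conventions `0/0 = 0` and `log 0 = 0`, this is `0` when `p = 0` and `q = 0`). -/
noncomputable def klBern (p q : ℝ) : ℝ :=
  p * Real.log (p / q) + (1 - p) * Real.log ((1 - p) / (1 - q))

lemma sub_inv_div_two_le_log {z : ℝ} (hz0 : 0 < z) (hz : z ≤ 1) :
    (z - z⁻¹) / 2 ≤ log z := by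
  rw [← sinh_log hz0]
  exact sinh_le_self_iff.2 (log_nonpos hz0.le hz)

lemma sub_sq_le_log_one_add {x : ℝ} (hx : -(1 / 2) ≤ x) : x - x ^ 2 ≤ log (1 + x) := by
  have hpos : 0 < 1 + x := by linarith
  rcases le_total 0 x with hx0 | hx0
  · calc x - x ^ 2 ≤ 1 - (1 + x)⁻¹ := by
          rw [← sub_nonneg]; field_simp; nlinarith [pow_nonneg hx0 3]
      _ ≤ log (1 + x) := one_sub_inv_le_log_of_pos hpos
  · calc x - x ^ 2 ≤ ((1 + x) - (1 + x)⁻¹) / 2 := by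
          rw [← sub_nonneg]; field_simp
          nlinarith [mul_nonneg (sq_nonneg x) (by linarith : 0 ≤ 1 + 2 * x)]
      _ ≤ log (1 + x) := sub_inv_div_two_le_log hpos (by linarith)

lemma klBern_le_of_abs_le {a ε : ℝ} (ha0 : 0 ≤ a) (ha : a ≤ 1 / 2) (hε : |ε| ≤ 1 / 2) :
    klBern a ((1 + ε) * a) ≤ 2 * a * ε ^ 2 := by
  rcases ha0.eq_or_lt with rfl | hapos
  · simp [klBern]
  have h1a : 0 < 1 - a := by linarith
  set t := -(ε * a) / (1 - a) with ht
  have hcancel : a * ε + (1 - a) * t = 0 := by rw [ht]; field_simp; ring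
  have htε : |t| ≤ |ε| := by
    rw [ht, abs_div, abs_neg, abs_mul, abs_of_pos hapos, abs_of_pos h1a, div_le_iff₀ h1a]
    nlinarith [abs_nonneg ε]
  have hε1 : 0 < 1 + ε := by linarith [neg_abs_le ε]
  have hlog1 : log (a / ((1 + ε) * a)) = -log (1 + ε) := by
    rw [← log_inv]; congr 1; field_simp
  have hlog2 : log ((1 - a) / (1 - (1 + ε) * a)) = -log (1 + t) := by
    rw [← log_inv]; congr 1; rw [ht]; field_simp; ring
  have hε' := sub_sq_le_log_one_add (neg_le_of_abs_le hε)
  have ht' := sub_sq_le_log_one_add (neg_le_of_abs_le (htε.trans hε))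
  have hsq : (1 - a) * t ^ 2 ≤ a * ε ^ 2 := by
    have hεt : -(ε * t) ≤ ε ^ 2 :=
      calc -(ε * t) ≤ |ε| * |t| := (neg_le_abs _).trans (abs_mul ε t).le
        _ ≤ |ε| * |ε| := by gcongr
        _ = ε ^ 2 := by rw [← sq, sq_abs]
    calc (1 - a) * t ^ 2 = a * -(ε * t) := by linear_combination t * hcancel
      _ ≤ a * ε ^ 2 := by gcongr
  calc klBern a ((1 + ε) * a) = a * (-log (1 + ε)) + (1 - a) * (-log (1 + t)) := by
        rw [klBern, hlog1, hlog2]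
    _ ≤ a * (ε ^ 2 - ε) + (1 - a) * (t ^ 2 - t) := by gcongr <;> linarith
    _ = a * ε ^ 2 + (1 - a) * t ^ 2 := by linear_combination -hcancel
    _ ≤ 2 * a * ε ^ 2 := by linarith

theorem stmt0_general (a δ : ℝ) (ha0 : 0 ≤ a) (ha : a ≤ 1 / 2) (hδ0 : 0 ≤ δ) (hδ : δ ≤ 1 / 2) :
    klBern a ((1 + δ) * a) ≤ 2 * a * δ ^ 2 ∧ klBern a ((1 - δ) * a) ≤ 2 * a * δ ^ 2 := by
  have hδabs : |δ| ≤ 1 / 2 := by rwa [abs_of_nonneg hδ0]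
  refine ⟨klBern_le_of_abs_le ha0 ha hδabs, ?_⟩
  simpa [sub_eq_add_neg] using klBern_le_of_abs_le ha0 ha (ε := -δ) (by rwa [abs_neg])

/-- For `0 ≤ a ≤ 1/2` and `0 ≤ δ ≤ 1/2` (with `(1±δ)a ∈ [0,1]`),
`KL(Bern(a), Bern((1±δ)a)) ≤ 2aδ²`. -/
theorem stmt0 (a δ : ℝ) (ha0 : 0 ≤ a) (ha : a ≤ 1 / 2) (hδ0 : 0 ≤ δ) (hδ : δ ≤ 1 / 2)
    (h1 : (1 + δ) * a ∈ Set.Icc (0 : ℝ) 1) (h2 : (1 - δ) * a ∈ Set.Icc (0 : ℝ) 1) :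
    klBern a ((1 + δ) * a) ≤ 2 * a * δ ^ 2 ∧ klBern a ((1 - δ) * a) ≤ 2 * a * δ ^ 2 :=
  stmt0_general a δ ha0 ha hδ0 hδ
end

section
/- In the independent-values bilateral trade model, the expected Gains from Trade of a fixed-price action (p,q) decomposes as GFT(p,q) = H(p,q) + V(p,q) + Profit(p,q), where H(p,q) = (∫₀ᵖ F_S(x) dx)·(1 − F_B(q)), V(p,q) = F_S(p)·∫_q¹ (1 − F_B(y)) dy, and Profit(p,q) = (q − p)·F_S(p)·(1 − F_B(q)). -/
/-!
Split the gain of a trade at the two prices: on `{S ≤ p, q ≤ B}`,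
`B - S = (B - q)⁺ + (q - p) + (p - S)⁺`, and `(B - q)⁺`, `(p - S)⁺` already vanish off
`{q ≤ B}`, `{S ≤ p}` respectively. Hence `GFT(p,q)` is the sum of the expectations of
`1{S ≤ p} (B - q)⁺`, `(q - p) 1{S ≤ p} 1{q ≤ B}` and `(p - S)⁺ 1{q ≤ B}`. Independence
factors each into a product, and the layer-cake formula gives
`E[(B - q)⁺] = ∫_q¹ P[y ≤ B] dy` and `E[(p - S)⁺] = ∫₀ᵖ P[S ≤ x] dx`.
-/

open MeasureTheory Set

theorem indicator_one_mem_unitInterval {α : Type*} (s : Set α) (x : α) :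
    s.indicator 1 x ∈ unitInterval := by
  by_cases h : x ∈ s <;> simp [h]

theorem sub_mul_ite_and_eq (s b p q : ℝ) :
    (b - s) * (if s ≤ p ∧ q ≤ b then 1 else 0)
      = (Iic p).indicator 1 s * max (b - q) 0
        + (q - p) * ((Iic p).indicator 1 s * (Ici q).indicator 1 b)
        + max (p - s) 0 * (Ici q).indicator 1 b := by
  by_cases hs : s ≤ p <;> by_cases hb : q ≤ b <;> simp [hs, hb, sub_nonneg.2] <;> linarith

section

variable {Ω : Type*} [MeasurableSpace Ω] {μ : Measure Ω}

theorem integrable_comp_mul_comp_of_mem_unitInterval [IsFiniteMeasure μ] {X Y : Ω → ℝ}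
    {f g : ℝ → ℝ} (hX : Measurable X) (hY : Measurable Y) (hf : Measurable f)
    (hg : Measurable g) (hfX : ∀ ω, f (X ω) ∈ unitInterval)
    (hgY : ∀ ω, g (Y ω) ∈ unitInterval) :
    Integrable (fun ω => f (X ω) * g (Y ω)) μ :=
  .of_mem_Icc 0 1 ((hf.comp hX).mul (hg.comp hY)).aemeasurable
    (ae_of_all _ fun ω => unitInterval.mul_mem (hfX ω) (hgY ω))

theorem integral_indicator_one_comp {X : Ω → ℝ} (hX : Measurable X) {s : Set ℝ}
    (hs : MeasurableSet s) : ∫ ω, s.indicator 1 (X ω) ∂μ = μ.real (X ⁻¹' s) := by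
  simp_rw [← indicator_comp_right (g := (1 : ℝ → ℝ)) X]
  exact integral_indicator_one (hX hs)

theorem probReal_le_eq_one_sub_probReal_lt [IsProbabilityMeasure μ] {X : Ω → ℝ}
    (hX : Measurable X) (y : ℝ) : μ.real {ω | y ≤ X ω} = 1 - μ.real {ω | X ω < y} := by
  rw [← probReal_compl_eq_one_sub (measurableSet_lt hX measurable_const)]
  congr 1
  ext ω
  simp

theorem integral_max_sub_const_zero [IsFiniteMeasure μ] {X : Ω → ℝ} (hX : AEMeasurable X μ)
    {q c : ℝ} (hXc : ∀ᵐ ω ∂μ, X ω ≤ c) (hqc : q ≤ c) :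
    ∫ ω, max (X ω - q) 0 ∂μ = ∫ y in q..c, μ.real {ω | y ≤ X ω} := by
  have hbound : ∀ᵐ ω ∂μ, max (X ω - q) 0 ∈ Icc 0 (c - q) := by
    filter_upwards [hXc] with ω hω
    exact ⟨le_max_right _ _, max_le (by linarith) (by linarith)⟩
  have hint : Integrable (fun ω => max (X ω - q) 0) μ :=
    .of_mem_Icc 0 (c - q) ((hX.sub_const q).max aemeasurable_const) hbound
  rw [hint.integral_eq_integral_Ioc_meas_le (ae_of_all _ fun _ => le_max_right _ _)
      (hbound.mono fun _ h => h.2),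
    ← intervalIntegral.integral_of_le (sub_nonneg.2 hqc)]
  have hlevel : ∀ t, 0 < t → {ω | t ≤ max (X ω - q) 0} = {ω | t + q ≤ X ω} := by
    intro t ht
    ext ω
    simp only [mem_ofPred_eq, le_max_iff, ht.not_ge, or_false, le_sub_iff_add_le]
  rw [intervalIntegral.integral_congr_ae (g := fun t => μ.real {ω | t + q ≤ X ω})
      (ae_of_all _ fun t ht => by rw [hlevel t (by simpa [hqc] using ht.1)]),
    intervalIntegral.integral_comp_add_right (fun y => μ.real {ω | y ≤ X ω}), zero_add,
    sub_add_cancel]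

theorem integral_max_const_sub_zero [IsFiniteMeasure μ] {X : Ω → ℝ} (hX : AEMeasurable X μ)
    {a p : ℝ} (hXa : ∀ᵐ ω ∂μ, a ≤ X ω) (hap : a ≤ p) :
    ∫ ω, max (p - X ω) 0 ∂μ = ∫ x in a..p, μ.real {ω | X ω ≤ x} := by
  have h := integral_max_sub_const_zero hX.neg (hXa.mono fun _ h => neg_le_neg h) (neg_le_neg hap)
  simp only [Pi.neg_apply, neg_sub_neg] at h
  rw [h, ← intervalIntegral.integral_comp_neg]
  simp only [neg_le_neg_iff]

end

/-- Independent values: the expected Gains from Trade of a fixed-price action `(p,q)`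
decomposes as `GFT(p,q) = H(p,q) + V(p,q) + Profit(p,q)`, where
`H(p,q) = (∫₀ᵖ F_S) · (1 − F_B(q))`, `V(p,q) = F_S(p) · ∫_q¹ (1 − F_B)`,
`Profit(p,q) = (q − p) · F_S(p) · (1 − F_B(q))`,
with `F_S(x) = P[S ≤ x]` and `F_B(y) = P[B < y]`. -/
theorem stmt1 {Ω : Type*} [MeasurableSpace Ω] (μ : Measure Ω) [IsProbabilityMeasure μ]
    (S B : Ω → ℝ) (hS : Measurable S) (hB : Measurable B)
    (hS01 : ∀ ω, S ω ∈ Set.Icc (0 : ℝ) 1) (hB01 : ∀ ω, B ω ∈ Set.Icc (0 : ℝ) 1)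
    (hind : ProbabilityTheory.IndepFun S B μ)
    (p q : ℝ) (hp : p ∈ Set.Icc (0 : ℝ) 1) (hq : q ∈ Set.Icc (0 : ℝ) 1) :
    ∫ ω, (B ω - S ω) * Set.indicator {ω' | S ω' ≤ p ∧ q ≤ B ω'} (fun _ => (1 : ℝ)) ω ∂μ
      = (∫ x in (0 : ℝ)..p, (μ {ω | S ω ≤ x}).toReal) * (1 - (μ {ω | B ω < q}).toReal)
        + (μ {ω | S ω ≤ p}).toReal * (∫ y in q..(1 : ℝ), (1 - (μ {ω | B ω < y}).toReal))
        + (q - p) * (μ {ω | S ω ≤ p}).toReal * (1 - (μ {ω | B ω < q}).toReal) := by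
  have hI : Measurable ((Iic p).indicator (1 : ℝ → ℝ)) :=
    measurable_one.indicator measurableSet_Iic
  have hC : Measurable ((Ici q).indicator (1 : ℝ → ℝ)) :=
    measurable_one.indicator measurableSet_Ici
  have hBq : Measurable fun b : ℝ => max (b - q) 0 := by fun_prop
  have hpS : Measurable fun s : ℝ => max (p - s) 0 := by fun_prop
  have hIS := fun ω => indicator_one_mem_unitInterval (Iic p) (S ω)
  have hCB := fun ω => indicator_one_mem_unitInterval (Ici q) (B ω)
  have hV := integrable_comp_mul_comp_of_mem_unitInterval (μ := μ) hS hB hI hBq hIS fun ω =>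
    ⟨le_max_right _ _, max_le (by linarith [(hB01 ω).2, hq.1]) zero_le_one⟩
  have hP := (integrable_comp_mul_comp_of_mem_unitInterval (μ := μ) hS hB hI hC hIS
    hCB).const_mul (q - p)
  have hH := integrable_comp_mul_comp_of_mem_unitInterval (μ := μ) hS hB hpS hC
    (fun ω => ⟨le_max_right _ _, max_le (by linarith [(hS01 ω).1, hp.2]) zero_le_one⟩) hCB
  have hindep : ∀ {f g : ℝ → ℝ}, Measurable f → Measurable g →
      ∫ ω, f (S ω) * g (B ω) ∂μ = (∫ ω, f (S ω) ∂μ) * ∫ ω, g (B ω) ∂μ :=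
    fun hf hg =>
      hind.integral_fun_comp_mul_comp hS.aemeasurable hB.aemeasurable
        hf.aestronglyMeasurable hg.aestronglyMeasurable
  simp only [indicator_apply, mem_ofPred_eq]
  rw [integral_congr_ae (ae_of_all _ fun ω => sub_mul_ite_and_eq (S ω) (B ω) p q),
    integral_add (by exact hV.add hP) hH, integral_add hV hP, integral_const_mul,
    hindep hI hBq, hindep hI hC, hindep hpS hC,
    integral_indicator_one_comp hS measurableSet_Iic,
    integral_indicator_one_comp hB measurableSet_Ici,
    integral_max_sub_const_zero hB.aemeasurable (ae_of_all _ fun ω => (hB01 ω).2) hq.2,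
    integral_max_const_sub_zero hS.aemeasurable (ae_of_all _ fun ω => (hS01 ω).1) hp.1]
  have hSp : S ⁻¹' Iic p = {ω | S ω ≤ p} := rfl
  have hqB : B ⁻¹' Ici q = {ω | q ≤ B ω} := rfl
  simp_rw [hSp, hqB, probReal_le_eq_one_sub_probReal_lt hB, measureReal_def]
  ring
end

section
/- In the correlated-values lower-bound construction, a mechanism restricted to the grid A that satisfies Global Budget Balance in expectation must satisfy Global Price Balance: E[Σ_{t=1}^{T} (Q_t − P_t)] ≥ 0. Formally: suppose there exists α > 0 such that for every action (p,q) ∈ A, if p ≤ q then the trade success probability is at most α, and if p > q then it is at least α. If E[Σ_t (Q_t − P_t)·1[trade succeeds at t]] ≥ 0, then E[Σ_t (Q_t − P_t)] ≥ 0. -/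
open MeasureTheory

/-!
Condition each round on the posted prices `(P_t, Q_t)`: by the pull-out property the expected
profit `E[(Q_t - P_t) · 1[success]]` equals `E[(Q_t - P_t) · π(P_t, Q_t)]`. Pointwise,
`(q - p) π(p, q) ≤ α (q - p)`, since `π ≤ α` where `q - p ≥ 0` and `π ≥ α` where `q - p < 0`.
Summing over rounds, `0 ≤ E[profit] ≤ α · E[Σ_t (Q_t - P_t)]`, and `α > 0`.
-/

theorem integral_mul_eq_integral_mul_of_condExp_eq {Ω : Type*} {m mΩ : MeasurableSpace Ω}
    {μ : Measure Ω} (hm : m ≤ mΩ) [SigmaFinite (μ.trim hm)] {f g φ : Ω → ℝ}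
    (hf : StronglyMeasurable[m] f) (hfg : Integrable (f * g) μ) (hg : Integrable g μ)
    (hφ : μ[g | m] =ᵐ[μ] φ) :
    Integrable (f * φ) μ ∧ ∫ ω, (f * g) ω ∂μ = ∫ ω, (f * φ) ω ∂μ := by
  have hpull : μ[f * g | m] =ᵐ[μ] f * φ :=
    (condExp_mul_of_stronglyMeasurable_left hf hfg hg).trans (Filter.EventuallyEq.rfl.mul hφ)
  exact ⟨integrable_condExp.congr hpull, (integral_condExp hm).symm.trans (integral_congr_ae hpull)⟩

theorem MeasureTheory.Integrable.mul_indicator_one {Ω : Type*} [MeasurableSpace Ω]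
    {μ : Measure Ω} {f : Ω → ℝ} (hf : Integrable f μ) {S : Set Ω} (hS : MeasurableSet S) :
    Integrable (fun ω => f ω * S.indicator (fun _ => (1 : ℝ)) ω) μ := by
  refine (hf.indicator hS).congr (.of_forall fun ω => ?_)
  by_cases hω : ω ∈ S <;> simp [hω]

theorem sub_mul_le_mul_sub {A : Set (ℝ × ℝ)} {π : ℝ × ℝ → ℝ} {α : ℝ}
    (hπle : ∀ pq ∈ A, pq.1 ≤ pq.2 → π pq ≤ α) (hπge : ∀ pq ∈ A, pq.2 < pq.1 → α ≤ π pq)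
    {p q : ℝ} (hpq : (p, q) ∈ A) : (q - p) * π (p, q) ≤ α * (q - p) := by
  rcases le_or_gt p q with h | h
  · nlinarith [hπle _ hpq h]
  · nlinarith [hπge _ hpq h]

theorem integral_sub_mul_indicator_le {Ω : Type*} [MeasurableSpace Ω] {μ : Measure Ω}
    [IsFiniteMeasure μ] {P Q : Ω → ℝ} (hP : Measurable P) (hQ : Measurable Q)
    (hint : Integrable (fun ω => Q ω - P ω) μ) {S : Set Ω} (hS : MeasurableSet S)
    {A : Set (ℝ × ℝ)} (hA : ∀ ω, (P ω, Q ω) ∈ A) {π : ℝ × ℝ → ℝ} {α : ℝ}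
    (hπle : ∀ pq ∈ A, pq.1 ≤ pq.2 → π pq ≤ α) (hπge : ∀ pq ∈ A, pq.2 < pq.1 → α ≤ π pq)
    (hcond : μ[S.indicator (fun _ => (1 : ℝ)) |
        MeasurableSpace.comap (fun ω => (P ω, Q ω)) inferInstance] =ᵐ[μ] fun ω => π (P ω, Q ω)) :
    ∫ ω, (Q ω - P ω) * S.indicator (fun _ => (1 : ℝ)) ω ∂μ ≤ α * ∫ ω, (Q ω - P ω) ∂μ := by
  have hPQ : Measurable fun ω => (P ω, Q ω) := hP.prodMk hQ
  have hf : StronglyMeasurable[MeasurableSpace.comap (fun ω => (P ω, Q ω)) inferInstance]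
      fun ω => Q ω - P ω :=
    ((measurable_snd.sub measurable_fst).comp (comap_measurable _)).stronglyMeasurable
  obtain ⟨hfπ, heq⟩ := integral_mul_eq_integral_mul_of_condExp_eq hPQ.comap_le hf
    (hint.mul_indicator_one hS) ((integrable_const 1).indicator hS) hcond
  calc ∫ ω, (Q ω - P ω) * S.indicator (fun _ => (1 : ℝ)) ω ∂μ
      = ∫ ω, (Q ω - P ω) * π (P ω, Q ω) ∂μ := heq
    _ ≤ ∫ ω, α * (Q ω - P ω) ∂μ :=
        integral_mono hfπ (hint.const_mul α) fun ω => sub_mul_le_mul_sub hπle hπge (hA ω)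
    _ = α * ∫ ω, (Q ω - P ω) ∂μ := integral_const_mul α _

/-- Global Budget Balance (in expectation) implies Global Price Balance: if there is `α > 0`
such that for every action `(p,q) ∈ A` the conditional trade-success probability
`π(p,q)` satisfies `π(p,q) ≤ α` when `p ≤ q` and `π(p,q) ≥ α` when `p > q`, and
`E[Σ_t (Q_t − P_t)·1[trade succeeds at t]] ≥ 0`, then `E[Σ_t (Q_t − P_t)] ≥ 0`. -/
theorem stmt12 {Ω : Type*} [MeasurableSpace Ω] (μ : Measure Ω) [IsProbabilityMeasure μ]
    (T : ℕ) (P Q : Fin T → Ω → ℝ)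
    (hPm : ∀ t, Measurable (P t)) (hQm : ∀ t, Measurable (Q t))
    (hP01 : ∀ t ω, P t ω ∈ Set.Icc (0 : ℝ) 1) (hQ01 : ∀ t ω, Q t ω ∈ Set.Icc (0 : ℝ) 1)
    (A : Set (ℝ × ℝ)) (hA : ∀ t ω, (P t ω, Q t ω) ∈ A)
    (Succ : Fin T → Set Ω) (hSucc : ∀ t, MeasurableSet (Succ t))
    (π : ℝ × ℝ → ℝ) (α : ℝ) (hα : 0 < α)
    (hπle : ∀ pq ∈ A, pq.1 ≤ pq.2 → π pq ≤ α)
    (hπge : ∀ pq ∈ A, pq.2 < pq.1 → α ≤ π pq)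
    (hcond : ∀ t, μ[Set.indicator (Succ t) (fun _ => (1 : ℝ)) |
          MeasurableSpace.comap (fun ω => (P t ω, Q t ω)) inferInstance]
        =ᵐ[μ] fun ω => π (P t ω, Q t ω))
    (hGBB : 0 ≤ ∫ ω, ∑ t : Fin T,
        (Q t ω - P t ω) * Set.indicator (Succ t) (fun _ => (1 : ℝ)) ω ∂μ) :
    0 ≤ ∫ ω, ∑ t : Fin T, (Q t ω - P t ω) ∂μ := by
  have hint : ∀ t, Integrable (fun ω => Q t ω - P t ω) μ := fun t =>
    (Integrable.of_mem_Icc 0 1 (hQm t).aemeasurable (ae_of_all _ (hQ01 t))).sub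
      (Integrable.of_mem_Icc 0 1 (hPm t).aemeasurable (ae_of_all _ (hP01 t)))
  have hbound : 0 ≤ α * ∫ ω, ∑ t : Fin T, (Q t ω - P t ω) ∂μ := calc
    0 ≤ ∫ ω, ∑ t : Fin T, (Q t ω - P t ω) * (Succ t).indicator (fun _ => (1 : ℝ)) ω ∂μ := hGBB
    _ = ∑ t : Fin T, ∫ ω, (Q t ω - P t ω) * (Succ t).indicator (fun _ => (1 : ℝ)) ω ∂μ :=
      integral_finsetSum _ fun t _ => (hint t).mul_indicator_one (hSucc t)
    _ ≤ ∑ t : Fin T, α * ∫ ω, (Q t ω - P t ω) ∂μ := Finset.sum_le_sum fun t _ =>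
      integral_sub_mul_indicator_le (hPm t) (hQm t) (hint t) (hSucc t) (hA t) hπle hπge (hcond t)
    _ = α * ∫ ω, ∑ t : Fin T, (Q t ω - P t ω) ∂μ := by
      rw [integral_finsetSum _ fun t _ => hint t, Finset.mul_sum]
  exact nonneg_of_mul_nonneg_right hbound hα
end

section
/- Discretization preserves trade outcomes in the correlated support: let V be the discrete support consisting of points of the form (k/(5K), 0.4 + k/(5K)) for k ∈ [0:3K], (0.2 + k/(5K), 0.4 + k/(5K)) for k ∈ [0:2K], the corners {0,1}², and (0.4, 0.6). For any price pair (p̄, q̄) ∈ [0,1]², define the rounded pair (p, q) = (min(⌊p̄·5K⌋/(5K), 0.6), min(⌈q̄·5K⌉/(5K), 0.4)). Then for every value pair (s, b) ∈ V with s < b, the trade outcome is preserved: 1[s ≤ p ∧ q ≤ b] = 1[s ≤ p̄ ∧ q̄ ≤ b]; and for (s,b) ∈ V with s ≥ b (i.e., (s,b) ∈ {(0,0), (1,0), (1,1)}), the discretized trade can only weakly improve GFT and profit, since b − s ≤ 0 and q − p ≥ q̄ − p̄ fails only on nonpositive-GFT trades. -/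
open scoped Classical

/-- The discrete value support `V` of the correlated-values lower-bound construction:
upper-left points `(k/(5K), 0.4 + k/(5K))` for `k ∈ [0:3K]`, lower-right points
`(0.2 + k/(5K), 0.4 + k/(5K))` for `k ∈ [0:2K]`, the corners `{0,1}²`, and `(0.4, 0.6)`. -/
def Vsupp (K : ℕ) : Set (ℝ × ℝ) :=
  {v | (∃ k : ℕ, k ≤ 3 * K ∧ v = ((k : ℝ) / (5 * K), 0.4 + (k : ℝ) / (5 * K)))
    ∨ (∃ k : ℕ, k ≤ 2 * K ∧ v = (0.2 + (k : ℝ) / (5 * K), 0.4 + (k : ℝ) / (5 * K)))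
    ∨ ((v.1 = 0 ∨ v.1 = 1) ∧ (v.2 = 0 ∨ v.2 = 1))
    ∨ v = (0.4, 0.6)}

/-- The discretized seller price: `p̄` rounded down to the grid, capped at `0.6`. -/
noncomputable def roundP (K : ℕ) (p : ℝ) : ℝ :=
  min ((⌊p * (5 * (K : ℝ))⌋ : ℝ) / (5 * K)) 0.6

/-- The discretized buyer price: `q̄` rounded up to the grid, floored at `0.4`. -/
noncomputable def roundQ (K : ℕ) (q : ℝ) : ℝ :=
  max ((⌈q * (5 * (K : ℝ))⌉ : ℝ) / (5 * K)) 0.4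

/-!
Rounding `p̄` down to the grid `(1/(5K))ℤ` cannot move it past a grid point `s ≤ 0.6`, and rounding
`q̄` up cannot move it past a grid point `b ≥ 0.4`. Every point of `V` with `s < b` has such
coordinates, so the trade decision is unchanged there. At the remaining corners `b ≤ s` rounding
can only cancel trades, and a cancelled trade has gains `b - s ≤ 0` and margin
`q̄ - p̄ ≤ b - s ≤ 0`, while `q - p ≥ q̄ - p̄` for the trades that survive.
-/

def OnGrid (K : ℕ) (x : ℝ) : Prop := ∃ m : ℤ, x * (5 * K) = m

section Discretization

variable {K : ℕ}

lemma five_mul_natCast_pos (hK : 0 < K) : (0 : ℝ) < 5 * K := by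
  have : (0 : ℝ) < K := by exact_mod_cast hK
  positivity

lemma OnGrid.add {x y : ℝ} (hx : OnGrid K x) (hy : OnGrid K y) : OnGrid K (x + y) := by
  obtain ⟨m, hm⟩ := hx
  obtain ⟨n, hn⟩ := hy
  exact ⟨m + n, by push_cast; rw [add_mul, hm, hn]⟩

lemma onGrid_natCast_div (hK : 0 < K) (k : ℕ) : OnGrid K (k / (5 * K)) :=
  ⟨k, by rw [div_mul_cancel₀ _ (five_mul_natCast_pos hK).ne']; norm_cast⟩

lemma onGrid_of_five_mul_eq {c : ℝ} (j : ℤ) (hc : 5 * c = j) : OnGrid K c :=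
  ⟨j * K, by push_cast; rw [← hc]; ring⟩

lemma roundP_le (hK : 0 < K) (p : ℝ) : roundP K p ≤ p :=
  calc roundP K p ≤ (⌊p * (5 * (K : ℝ))⌋ : ℝ) / (5 * K) := min_le_left _ _
    _ ≤ p := (div_le_iff₀ (five_mul_natCast_pos hK)).2 (Int.floor_le _)

lemma le_roundQ (hK : 0 < K) (q : ℝ) : q ≤ roundQ K q :=
  ((le_div_iff₀ (five_mul_natCast_pos hK)).2 (Int.le_ceil _)).trans (le_max_left _ _)

lemma le_roundP_iff (hK : 0 < K) {s : ℝ} (hs : OnGrid K s) (hs6 : s ≤ 0.6) (p : ℝ) :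
    s ≤ roundP K p ↔ s ≤ p := by
  obtain ⟨m, hm⟩ := hs
  have hN := five_mul_natCast_pos hK
  refine ⟨fun h => h.trans (roundP_le hK p), fun h => le_min ?_ hs6⟩
  have hmp : (m : ℝ) ≤ p * (5 * K) := hm ▸ mul_le_mul_of_nonneg_right h hN.le
  rw [le_div_iff₀ hN, hm]
  exact_mod_cast Int.le_floor.2 hmp

lemma roundQ_le_iff (hK : 0 < K) {b : ℝ} (hb : OnGrid K b) (hb4 : 0.4 ≤ b) (q : ℝ) :
    roundQ K q ≤ b ↔ q ≤ b := by
  obtain ⟨m, hm⟩ := hb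
  have hN := five_mul_natCast_pos hK
  refine ⟨fun h => (le_roundQ hK q).trans h, fun h => max_le ?_ hb4⟩
  have hqm : q * (5 * K) ≤ m := hm ▸ mul_le_mul_of_nonneg_right h hN.le
  rw [div_le_iff₀ hN, hm]
  exact_mod_cast Int.ceil_le.2 hqm

lemma natCast_div_le (hK : 0 < K) {k n : ℕ} (hk : k ≤ n * K) : (k : ℝ) / (5 * K) ≤ n / 5 := by
  have hk' : (k : ℝ) ≤ n * K := by exact_mod_cast hk
  rw [div_le_div_iff₀ (five_mul_natCast_pos hK) (by norm_num)]
  nlinarith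

lemma mem_Vsupp_le_or_onGrid (hK : 0 < K) {s b : ℝ} (hv : (s, b) ∈ Vsupp K) :
    b ≤ s ∨ (OnGrid K s ∧ OnGrid K b ∧ s ≤ 0.6 ∧ 0.4 ≤ b) := by
  have h4 : OnGrid K 0.4 := onGrid_of_five_mul_eq 2 (by norm_num)
  have hdiv_nonneg (k : ℕ) : (0 : ℝ) ≤ k / (5 * K) := by positivity
  rcases hv with ⟨k, hk, hv⟩ | ⟨k, hk, hv⟩ |
    ⟨(rfl : s = 0) | (rfl : s = 1), (rfl : b = 0) | (rfl : b = 1)⟩ | hv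
  · obtain ⟨rfl, rfl⟩ := Prod.ext_iff.1 hv
    have := natCast_div_le hK (n := 3) hk
    refine Or.inr ⟨onGrid_natCast_div hK k, h4.add (onGrid_natCast_div hK k), ?_, ?_⟩ <;>
      linarith [hdiv_nonneg k]
  · obtain ⟨rfl, rfl⟩ := Prod.ext_iff.1 hv
    have := natCast_div_le hK (n := 2) hk
    refine Or.inr ⟨(onGrid_of_five_mul_eq 1 (by norm_num)).add (onGrid_natCast_div hK k),
      h4.add (onGrid_natCast_div hK k), ?_, ?_⟩ <;> linarith [hdiv_nonneg k]
  · exact Or.inl le_rfl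
  · exact Or.inr ⟨onGrid_of_five_mul_eq 0 (by norm_num), onGrid_of_five_mul_eq 5 (by norm_num),
      by norm_num, by norm_num⟩
  · exact Or.inl zero_le_one
  · exact Or.inl le_rfl
  · obtain ⟨rfl, rfl⟩ := Prod.ext_iff.1 hv
    exact Or.inr ⟨h4, onGrid_of_five_mul_eq 3 (by norm_num), by norm_num, by norm_num⟩

end Discretization

lemma mul_ite_le_mul_ite {α : Type*} [MulZeroOneClass α] [Preorder α] {P Q : Prop}
    [Decidable P] [Decidable Q] {x y : α} (hxy : x ≤ y) (hQP : Q → P) (hx : P → ¬Q → x ≤ 0) :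
    x * (if P then 1 else 0) ≤ y * (if Q then 1 else 0) := by
  by_cases hQ : Q
  · simpa [hQ, hQP hQ] using hxy
  · by_cases hP : P
    · simpa [hP, hQ] using hx hP hQ
    · simp [hP, hQ]

theorem stmt17_general (K : ℕ) (hK : 1 ≤ K) (pbar qbar : ℝ) :
    ∀ s b : ℝ, (s, b) ∈ Vsupp K →
      (s < b →
        ((s ≤ roundP K pbar ∧ roundQ K qbar ≤ b) ↔ (s ≤ pbar ∧ qbar ≤ b)))
      ∧ (b - s) * (if s ≤ pbar ∧ qbar ≤ b then (1 : ℝ) else 0)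
          ≤ (b - s) * (if s ≤ roundP K pbar ∧ roundQ K qbar ≤ b then (1 : ℝ) else 0)
      ∧ (qbar - pbar) * (if s ≤ pbar ∧ qbar ≤ b then (1 : ℝ) else 0)
          ≤ (roundQ K qbar - roundP K pbar) *
              (if s ≤ roundP K pbar ∧ roundQ K qbar ≤ b then (1 : ℝ) else 0) := by
  intro s b hv
  have hfewer : s ≤ roundP K pbar ∧ roundQ K qbar ≤ b → s ≤ pbar ∧ qbar ≤ b :=
    fun h => ⟨h.1.trans (roundP_le hK pbar), (le_roundQ hK qbar).trans h.2⟩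
  have hmargin : qbar - pbar ≤ roundQ K qbar - roundP K pbar := by
    linarith [roundP_le hK pbar, le_roundQ hK qbar]
  rcases mem_Vsupp_le_or_onGrid hK hv with hbs | ⟨hs, hb, hs6, hb4⟩
  · exact ⟨fun hsb => absurd hsb (not_lt.2 hbs),
      mul_ite_le_mul_ite le_rfl hfewer fun _ _ => by linarith,
      mul_ite_le_mul_ite hmargin hfewer fun h _ => by linarith [h.1, h.2]⟩
  · have htrade : s ≤ roundP K pbar ∧ roundQ K qbar ≤ b ↔ s ≤ pbar ∧ qbar ≤ b :=
      and_congr (le_roundP_iff hK hs hs6 pbar) (roundQ_le_iff hK hb hb4 qbar)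
    exact ⟨fun _ => htrade,
      mul_ite_le_mul_ite le_rfl htrade.1 fun h h' => absurd (htrade.2 h) h',
      mul_ite_le_mul_ite hmargin htrade.1 fun h h' => absurd (htrade.2 h) h'⟩

/-- Discretization preserves trade outcomes on the support `V`: for values `(s,b) ∈ V` with
`s < b` the trade outcome is unchanged, `1[s ≤ p ∧ q ≤ b] = 1[s ≤ p̄ ∧ q̄ ≤ b]`; and in all
cases (including `(s,b) ∈ {(0,0),(1,0),(1,1)}` where `b − s ≤ 0`) the Gains from Trade
`(b − s)·1[trade]` and the profit `(q − p)·1[trade]` can only weakly increase. -/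
theorem stmt17 (K : ℕ) (hK : 1 ≤ K) (pbar qbar : ℝ)
    (hp : pbar ∈ Set.Icc (0 : ℝ) 1) (hq : qbar ∈ Set.Icc (0 : ℝ) 1) :
    ∀ s b : ℝ, (s, b) ∈ Vsupp K →
      (s < b →
        ((s ≤ roundP K pbar ∧ roundQ K qbar ≤ b) ↔ (s ≤ pbar ∧ qbar ≤ b)))
      ∧ (b - s) * (if s ≤ pbar ∧ qbar ≤ b then (1 : ℝ) else 0)
          ≤ (b - s) * (if s ≤ roundP K pbar ∧ roundQ K qbar ≤ b then (1 : ℝ) else 0)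
      ∧ (qbar - pbar) * (if s ≤ pbar ∧ qbar ≤ b then (1 : ℝ) else 0)
          ≤ (roundQ K qbar - roundP K pbar) *
              (if s ≤ roundP K pbar ∧ roundQ K qbar ≤ b then (1 : ℝ) else 0) :=
  stmt17_general K hK pbar qbar
end
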